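/- arXiv:1511.06378 — 5 statements merged into one kernel-verified Lean document; each statement's English description precedes it below -/
import Mathlib

section
/- For integers r ≥ 2 and s ≥ 3, the largest adjacency eigenvalue of the kite graph P_r · K_s satisfies s − 1 + 1/(s(s−1)) < λ₁(P_r · K_s) < s − 1 + 1/(s−1)². -/
/-!
Write `q = s - 1`, `a = λ - q`, and read the Perron vector along the path as `x 0, …, x (r-1)`,
with `x (r-1)` at the junction. The clique vertices other than the junction carry a common
value `y`, and the eigenvalue equations there give `x (r-1) = (a+1) y` and
`x (r-2) = a (λ+1) y`, so `a > 0`. Along the path the ratios `t = x (i+1) / x i` start at `λ`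
and evolve by `t ↦ λ - 1/t`.

Lower bound: the last ratio `(a+1) / (a (λ+1))` is at most `λ`, which forces
`a > 1/(q (q+1))`. Upper bound: if `a ≥ 1/q²`, then `c = (q²+1)/(λ+1)` satisfies `c < λ` and
`c ≤ λ - 1/c`, so every ratio stays above `c`; for the last one this says `q² a < 1`.
-/

open Finset Matrix

/-- The kite (lollipop) graph P_r · K_s on r + s − 1 vertices: vertices 0, …, r−1 form a
path, and vertices r−1, …, r+s−2 form a clique. -/
def kiteGraph (r s : ℕ) : SimpleGraph (Fin (r + s - 1)) where
  Adj a b := a ≠ b ∧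
    ((a : ℕ) + 1 = b ∨ (b : ℕ) + 1 = a ∨ (r - 1 ≤ (a : ℕ) ∧ r - 1 ≤ (b : ℕ)))
  symm := by
    constructor
    rintro a b ⟨hab, h⟩
    exact ⟨hab.symm, by tauto⟩
  loopless := by constructor; rintro a ⟨hab, -⟩; exact hab rfl

instance (r s : ℕ) : DecidableRel (kiteGraph r s).Adj := fun a b => by
  unfold kiteGraph; infer_instance

lemma succ_le_mul_of_path_recurrence {x : ℕ → ℝ} {lam : ℝ} {n : ℕ} (hx : ∀ i ≤ n, 0 < x i)
    (h0 : lam * x 0 = x 1) (hrec : ∀ i < n, lam * x (i + 1) = x i + x (i + 2)) :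
    x (n + 1) ≤ lam * x n := by
  cases n with
  | zero => exact h0.ge
  | succ n => linarith [hrec n n.lt_succ_self, hx n n.le_succ]

lemma mul_lt_succ_of_path_recurrence {x : ℕ → ℝ} {lam c : ℝ} {n : ℕ} (hc : 0 < c)
    (hcl : c < lam) (hc2 : c ^ 2 + 1 ≤ lam * c) (hx : ∀ i ≤ n, 0 < x i)
    (h0 : lam * x 0 = x 1) (hrec : ∀ i < n, lam * x (i + 1) = x i + x (i + 2)) :
    ∀ i ≤ n, c * x i < x (i + 1) := by
  intro i hi
  induction i with
  | zero => rw [← h0]; exact mul_lt_mul_of_pos_right hcl (hx 0 hi)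
  | succ i ih =>
    have hprev := ih (by omega)
    have hrec_i := hrec i (by omega)
    have hxi := hx (i + 1) hi
    refine lt_of_mul_lt_mul_left ?_ hc.le
    nlinarith [mul_le_mul_of_nonneg_right hc2 hxi.le]

lemma lt_of_sub_add_one_le_mul {q lam : ℝ} (hq : 2 ≤ q) (hlam : q < lam)
    (h : lam - q + 1 ≤ lam * (lam - q) * (lam + 1)) : q + 1 / ((q + 1) * q) < lam := by
  obtain ⟨a, rfl⟩ : ∃ a, lam = q + a := ⟨lam - q, by ring⟩
  rw [add_sub_cancel_left] at h
  have ha : 0 < a := by linarith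
  suffices 1 / ((q + 1) * q) < a by linarith
  rw [div_lt_iff₀ (by positivity)]
  by_contra! hle
  have ha6 : 6 * a ≤ 1 := by
    nlinarith [mul_le_mul_of_nonneg_left (by nlinarith : (6:ℝ) ≤ (q + 1) * q) ha.le]
  nlinarith [mul_nonneg (mul_nonneg ha.le ha.le) ha.le, mul_nonneg ha.le (sub_nonneg.2 hq)]

lemma div_lt_self_and_sq_add_one_le_mul {q lam : ℝ} (hq : 2 ≤ q) (h : 1 ≤ (lam - q) * q ^ 2) :
    (q ^ 2 + 1) / (lam + 1) < lam ∧
      ((q ^ 2 + 1) / (lam + 1)) ^ 2 + 1 ≤ lam * ((q ^ 2 + 1) / (lam + 1)) := by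
  obtain ⟨a, rfl⟩ : ∃ a, lam = q + a := ⟨lam - q, by ring⟩
  rw [add_sub_cancel_left] at h
  have ha : 0 < a := by nlinarith
  have hd : 0 < q + a + 1 := by linarith
  constructor
  · rw [div_lt_iff₀ hd]; nlinarith
  · rw [div_pow, mul_div_assoc', div_add_one (by positivity), div_le_div_iff₀ (by positivity) hd]
    nlinarith [mul_nonneg ha.le (by nlinarith : (0:ℝ) ≤ q ^ 2 - 1),
      mul_nonneg (sub_nonneg.2 h) (by linarith : (0:ℝ) ≤ 2 * q),
      mul_nonneg (sub_nonneg.2 hq) (by positivity : (0:ℝ) ≤ q ^ 2 + 1),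
      mul_nonneg (mul_nonneg ha.le ha.le) (sq_nonneg q)]

theorem bounds_of_path_clique_recurrence {x : ℕ → ℝ} {lam q y : ℝ} {n : ℕ} (hq : 2 ≤ q)
    (hx : ∀ i ≤ n + 1, 0 < x i) (hy : 0 < y) (h0 : lam * x 0 = x 1)
    (hrec : ∀ i < n, lam * x (i + 1) = x i + x (i + 2))
    (hclique : (lam + 1) * y = x (n + 1) + q * y) (hjunction : lam * x (n + 1) = x n + q * y) :
    q + 1 / ((q + 1) * q) < lam ∧ lam < q + 1 / q ^ 2 := by
  have hx' : ∀ i ≤ n, 0 < x i := fun i hi => hx i (by omega)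
  have hlam : 0 < lam := pos_of_mul_pos_left (h0 ▸ hx 1 (by omega)) (hx 0 (by omega)).le
  have hxn1 : x (n + 1) = (lam - q + 1) * y := by linear_combination -hclique
  have hxn : x n = (lam - q) * (lam + 1) * y := by linear_combination lam * hxn1 - hjunction
  have hq_lt : q < lam := by
    have := hxn ▸ hx n (by omega)
    nlinarith [mul_pos (by linarith : (0:ℝ) < lam + 1) hy]
  constructor
  · refine lt_of_sub_add_one_le_mul hq hq_lt (le_of_mul_le_mul_right ?_ hy)
    have := succ_le_mul_of_path_recurrence hx' h0 hrec
    rw [hxn1, hxn] at this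
    linarith
  · by_contra! hle
    have hq2 : 1 ≤ (lam - q) * q ^ 2 := by
      have := (div_le_iff₀ (by positivity : (0:ℝ) < q ^ 2)).1 (le_sub_iff_add_le'.2 hle)
      linarith
    obtain ⟨hcl, hc2⟩ := div_lt_self_and_sq_add_one_le_mul hq hq2
    have hend := mul_lt_succ_of_path_recurrence (by positivity) hcl hc2 hx' h0 hrec n le_rfl
    rw [hxn1, hxn, show (q ^ 2 + 1) / (lam + 1) * ((lam - q) * (lam + 1) * y)
      = (q ^ 2 + 1) * (lam - q) * y by field_simp] at hend
    nlinarith [lt_of_mul_lt_mul_right hend hy.le]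

theorem SimpleGraph.sum_neighborFinset_eq_of_mulVec_eq_smul {V : Type*} [Fintype V]
    [DecidableEq V] (G : SimpleGraph V) [DecidableRel G.Adj] {lam : ℝ} {v : V → ℝ}
    (h : G.adjMatrix ℝ *ᵥ v = lam • v) (a : V) : ∑ b ∈ G.neighborFinset a, v b = lam * v a := by
  simpa [SimpleGraph.adjMatrix_mulVec_apply] using congrFun h a

section KiteGraph

variable {r s : ℕ} {lam : ℝ} {v : Fin (r + s - 1) → ℝ}

lemma kiteGraph_adj_iff {a b : Fin (r + s - 1)} : (kiteGraph r s).Adj a b ↔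
    (a : ℕ) ≠ b ∧ ((a : ℕ) + 1 = b ∨ (b : ℕ) + 1 = a ∨ (r - 1 ≤ (a : ℕ) ∧ r - 1 ≤ (b : ℕ))) := by
  rw [Fin.val_ne_iff]; rfl

lemma kiteGraph_path_recurrence (hr : 2 ≤ r) (hs : 1 ≤ s)
    (heig : (kiteGraph r s).adjMatrix ℝ *ᵥ v = lam • v) {x : ℕ → ℝ}
    (hxv : ∀ i (hi : i < r + s - 1), x i = v ⟨i, hi⟩) :
    lam * x 0 = x 1 ∧ ∀ i < r - 2, lam * x (i + 1) = x i + x (i + 2) := by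
  have hsum := (kiteGraph r s).sum_neighborFinset_eq_of_mulVec_eq_smul heig
  constructor
  · have hnbr : (kiteGraph r s).neighborFinset ⟨0, by omega⟩ = {⟨1, by omega⟩} := by
      ext b
      simp only [SimpleGraph.mem_neighborFinset, kiteGraph_adj_iff, ne_eq, Fin.ext_iff,
        mem_singleton]
      omega
    rw [hxv 0 (by omega), hxv 1 (by omega), ← hsum, hnbr, sum_singleton]
  · intro i hi
    have hnbr : (kiteGraph r s).neighborFinset ⟨i + 1, by omega⟩
        = {⟨i, by omega⟩, ⟨i + 2, by omega⟩} := by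
      ext b
      simp only [SimpleGraph.mem_neighborFinset, kiteGraph_adj_iff, ne_eq, Fin.ext_iff,
        mem_insert, mem_singleton]
      omega
    rw [hxv i (by omega), hxv (i + 1) (by omega), hxv (i + 2) (by omega), ← hsum, hnbr,
      sum_pair (by simp [Fin.ext_iff])]

lemma kiteGraph_neighborFinset_of_le {b : Fin (r + s - 1)} (hb : r ≤ b) :
    (kiteGraph r s).neighborFinset b = (Ici ⟨r - 1, by omega⟩).erase b := by
  ext c
  simp only [SimpleGraph.mem_neighborFinset, kiteGraph_adj_iff, ne_eq, Fin.ext_iff, mem_erase,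
    mem_Ici, Fin.le_def]
  omega

lemma kiteGraph_eigenvector_eq_on_clique (hlam : lam + 1 ≠ 0)
    (heig : (kiteGraph r s).adjMatrix ℝ *ᵥ v = lam • v)
    {b c : Fin (r + s - 1)} (hb : r ≤ b) (hc : r ≤ c) : v b = v c := by
  have hsum := (kiteGraph r s).sum_neighborFinset_eq_of_mulVec_eq_smul heig
  have key : ∀ d : Fin (r + s - 1), r ≤ d →
      (lam + 1) * v d = ∑ e ∈ Ici (⟨r - 1, by omega⟩ : Fin (r + s - 1)), v e := by
    intro d hd
    rw [← sum_erase_add _ _ (by simp [Fin.le_def]; omega : d ∈ Ici _),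
      ← kiteGraph_neighborFinset_of_le hd, hsum]
    ring
  exact mul_left_cancel₀ hlam ((key b hb).trans (key c hc).symm)

lemma kiteGraph_clique_junction_eq (hr : 2 ≤ r) (hs : 2 ≤ s) (hlam : lam + 1 ≠ 0)
    (heig : (kiteGraph r s).adjMatrix ℝ *ᵥ v = lam • v) {x : ℕ → ℝ}
    (hxv : ∀ i (hi : i < r + s - 1), x i = v ⟨i, hi⟩) :
    (lam + 1) * x r = x (r - 1) + (s - 1) * x r ∧
      lam * x (r - 1) = x (r - 2) + (s - 1) * x r := by
  have hsum := (kiteGraph r s).sum_neighborFinset_eq_of_mulVec_eq_smul heig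
  set junction : Fin (r + s - 1) := ⟨r - 1, by omega⟩
  have hclique : ∑ c ∈ Ioi junction, v c = (s - 1) * x r := by
    have hcard : #(Ioi junction) = s - 1 := by simp only [Fin.card_Ioi, junction]; omega
    rw [sum_congr rfl fun c hc => kiteGraph_eigenvector_eq_on_clique hlam heig (b := c)
      (c := ⟨r, by omega⟩) (by simp only [mem_Ioi, Fin.lt_def, junction] at hc; omega) le_rfl,
      sum_const, hcard,
      nsmul_eq_mul, Nat.cast_sub (by omega), Nat.cast_one, hxv r]
  constructor
  · have hr_eq := hsum ⟨r, by omega⟩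
    rw [kiteGraph_neighborFinset_of_le le_rfl, sum_erase_eq_sub (by simp [Fin.le_def]),
      ← add_sum_erase _ _ (mem_Ici.2 le_rfl), Ici_erase, hclique, ← hxv r, ← hxv (r - 1)] at hr_eq
    linarith
  · have hnbr : (kiteGraph r s).neighborFinset junction
        = insert ⟨r - 2, by omega⟩ (Ioi junction) := by
      ext c
      simp only [SimpleGraph.mem_neighborFinset, kiteGraph_adj_iff, mem_insert, mem_Ioi,
        Fin.lt_def, Fin.ext_iff, junction]
      omega
    rw [hxv (r - 1) (by omega), hxv (r - 2) (by omega), ← hclique, ← hsum, hnbr,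
      sum_insert (by simp [Fin.lt_def, junction]; omega)]

end KiteGraph

/-- For r ≥ 2 and s ≥ 3, the largest adjacency eigenvalue λ₁ (the eigenvalue of the
positive Perron eigenvector) of the kite graph P_r · K_s satisfies
s − 1 + 1/(s(s−1)) < λ₁ < s − 1 + 1/(s−1)². -/
theorem kite_lambda_bounds (r s : ℕ) (hr : 2 ≤ r) (hs : 3 ≤ s)
    (lam : ℝ) (v : Fin (r + s - 1) → ℝ) (hv : ∀ x, 0 < v x)
    (heig : (kiteGraph r s).adjMatrix ℝ *ᵥ v = lam • v) :
    (s : ℝ) - 1 + 1 / (s * (s - 1)) < lam ∧ lam < (s : ℝ) - 1 + 1 / ((s : ℝ) - 1) ^ 2 := by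
  set x : ℕ → ℝ := Function.extend Fin.val v 0
  have hxv : ∀ i (hi : i < r + s - 1), x i = v ⟨i, hi⟩ := fun i hi =>
    Fin.val_injective.extend_apply v 0 ⟨i, hi⟩
  have hx : ∀ i ≤ r - 1, 0 < x i := fun i hi => hxv i (by omega) ▸ hv _
  obtain ⟨h0, hrec⟩ := kiteGraph_path_recurrence hr (by omega) heig hxv
  have hlam : 0 < lam := pos_of_mul_pos_left (h0 ▸ hx 1 (by omega)) (hx 0 (by omega)).le
  obtain ⟨hclique, hjunction⟩ :=
    kiteGraph_clique_junction_eq hr (by omega) (by positivity) heig hxv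
  have hq : (2 : ℝ) ≤ s - 1 := by
    have : (3 : ℝ) ≤ s := by exact_mod_cast hs
    linarith
  rw [show r - 1 = r - 2 + 1 by omega] at hclique hjunction hx
  simpa using bounds_of_path_clique_recurrence hq hx (hxv r (by omega) ▸ hv _) h0 hrec
    hclique hjunction
end

section
/- The function f(x) = (x^k − x^{−k})/(x − x^{−1}) is strictly increasing for x > 1, for any integer k ≥ 2. -/
/-!
Writing `[k]_x = (x ^ k - x⁻¹ ^ k) / (x - x⁻¹)`, one has `[0]_x = 0`, `[1]_x = 1` and
`[k + 2]_x = [k]_x + (x ^ (k + 1) + x⁻¹ ^ (k + 1))`. Since `t ↦ t + t⁻¹` is strictly increasing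
on `[1, ∞)`, so is each `x ↦ x ^ n + x⁻¹ ^ n` with `n ≠ 0`; by two-step induction every `[k]` is
monotone on `(1, ∞)`, and strictly monotone once `k ≥ 2`.
-/

open Set

/-- The symmetric quantum integer `[k]_x`. -/
noncomputable def quantumNat {K : Type*} [Field K] (k : ℕ) (x : K) : K :=
  (x ^ k - x⁻¹ ^ k) / (x - x⁻¹)

section Field

variable {K : Type*} [Field K]

theorem quantumNat_zero (x : K) : quantumNat 0 x = 0 := by
  simp [quantumNat]

theorem quantumNat_one {x : K} (hx : x - x⁻¹ ≠ 0) : quantumNat 1 x = 1 := by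
  simp [quantumNat, hx]

theorem quantumNat_add_two (k : ℕ) {x : K} (hx : x - x⁻¹ ≠ 0) :
    quantumNat (k + 2) x = quantumNat k x + (x ^ (k + 1) + x⁻¹ ^ (k + 1)) := by
  have hx0 : x ≠ 0 := by
    rintro rfl
    simp at hx
  rw [quantumNat, quantumNat, div_add' _ _ _ hx]
  congr 1
  linear_combination (x ^ k - x⁻¹ ^ k) * mul_inv_cancel₀ hx0

end Field

section OrderedField

variable {K : Type*} [Field K] [LinearOrder K] [IsStrictOrderedRing K]

theorem add_inv_strictMonoOn : StrictMonoOn (fun t : K => t + t⁻¹) (Ici 1) := by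
  intro a (ha : 1 ≤ a) b (hb : 1 ≤ b) hab
  have hab1 : 1 < a * b := one_lt_mul_of_le_of_lt ha (ha.trans_lt hab)
  have key : b + b⁻¹ - (a + a⁻¹) = (b - a) * (a * b - 1) / (a * b) := by
    field_simp
    ring
  have : 0 < (b - a) * (a * b - 1) / (a * b) := by
    have := sub_pos.2 hab
    have := sub_pos.2 hab1
    positivity
  simpa [← key] using this

theorem pow_add_inv_pow_strictMonoOn {n : ℕ} (hn : n ≠ 0) :
    StrictMonoOn (fun x : K => x ^ n + x⁻¹ ^ n) (Ici 1) := by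
  have hpow : StrictMonoOn (fun x : K => x ^ n) (Ici 1) :=
    (pow_left_strictMonoOn₀ hn).mono fun x (hx : 1 ≤ x) => zero_le_one.trans hx
  simpa only [Function.comp_def, inv_pow] using
    add_inv_strictMonoOn.comp hpow fun x (hx : 1 ≤ x) => one_le_pow₀ hx

theorem sub_inv_ne_zero_of_one_lt {x : K} (hx : 1 < x) : x - x⁻¹ ≠ 0 :=
  (sub_pos.2 ((inv_lt_one_of_one_lt₀ hx).trans hx)).ne'

theorem quantumNat_eqOn_add_two (k : ℕ) :
    EqOn (quantumNat (k + 2)) (fun x : K => quantumNat k x + (x ^ (k + 1) + x⁻¹ ^ (k + 1)))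
      (Ioi 1) :=
  fun _ hx => quantumNat_add_two k (sub_inv_ne_zero_of_one_lt hx)

theorem quantumNat_monotoneOn : ∀ k : ℕ, MonotoneOn (quantumNat (K := K) k) (Ioi 1)
  | 0 => fun x _ y _ _ => by rw [quantumNat_zero, quantumNat_zero]
  | 1 => fun x hx y hy _ => by
    rw [quantumNat_one (sub_inv_ne_zero_of_one_lt hx),
      quantumNat_one (sub_inv_ne_zero_of_one_lt hy)]
  | k + 2 =>
    ((quantumNat_monotoneOn k).add
      ((pow_add_inv_pow_strictMonoOn k.succ_ne_zero).monotoneOn.mono Ioi_subset_Ici_self)).congr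
      (quantumNat_eqOn_add_two k).symm

theorem quantumNat_strictMonoOn {k : ℕ} (hk : 2 ≤ k) :
    StrictMonoOn (quantumNat (K := K) k) (Ioi 1) := by
  obtain ⟨k, rfl⟩ : ∃ j, k = j + 2 := ⟨k - 2, by omega⟩
  exact ((quantumNat_monotoneOn k).add_strictMono
    ((pow_add_inv_pow_strictMonoOn k.succ_ne_zero).mono Ioi_subset_Ici_self)).congr
    (quantumNat_eqOn_add_two k).symm

end OrderedField

/-- The function f(x) = (x^k − x^{−k})/(x − x^{−1}) is strictly increasing for x > 1,
for any integer k ≥ 2. -/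
theorem f_strictMonoOn (k : ℕ) (hk : 2 ≤ k) :
    StrictMonoOn (fun x : ℝ => (x ^ k - x⁻¹ ^ k) / (x - x⁻¹)) (Set.Ioi 1) :=
  quantumNat_strictMonoOn hk
end

section
/- Let G be a connected graph with principal eigenvector v scaled so the maximum entry is 1, attained at vertex x. If λ₁(G) > |N(x)| − 1, then for every subset U of N(x), |U| − 1 < Σ_{y ∈ U} v(y) ≤ |U|. -/
open Finset Matrix

theorem SimpleGraph.sum_neighborFinset_eq_of_adjMatrix_mulVec_eq_smul {V R : Type*} [Fintype V]
    [NonAssocSemiring R] (G : SimpleGraph V) [DecidableRel G.Adj] {lam : R} {v : V → R}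
    (heig : G.adjMatrix R *ᵥ v = lam • v) (x : V) :
    ∑ y ∈ G.neighborFinset x, v y = lam * v x := by
  simpa [SimpleGraph.adjMatrix_mulVec_apply] using congrFun heig x

theorem neighborhood_subset_sum_general {V : Type*} [Fintype V]
    (G : SimpleGraph V) [DecidableRel G.Adj]
    (lam : ℝ) (v : V → ℝ)
    (heig : G.adjMatrix ℝ *ᵥ v = lam • v)
    (x : V) (hmax : ∀ y, v y ≤ v x) (hx1 : v x = 1)
    (hlam : (G.degree x : ℝ) - 1 < lam) :
    ∀ U ⊆ G.neighborFinset x,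
      (U.card : ℝ) - 1 < ∑ y ∈ U, v y ∧ ∑ y ∈ U, v y ≤ (U.card : ℝ) := by
  intro U hU
  have hle : ∀ y, v y ≤ 1 := fun y => hx1 ▸ hmax y
  have hdefect (s : Finset V) : ∑ y ∈ s, (1 - v y) = s.card - ∑ y ∈ s, v y := by
    simp [sum_sub_distrib]
  -- The defects `1 - v y` are nonnegative and sum to `deg x - λ < 1` over all of `N(x)`.
  have hneighbors : ∑ y ∈ G.neighborFinset x, (1 - v y) = G.degree x - lam := by
    rw [hdefect, G.sum_neighborFinset_eq_of_adjMatrix_mulVec_eq_smul heig, hx1, mul_one,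
      G.card_neighborFinset_eq_degree]
  have hsubset : ∑ y ∈ U, (1 - v y) ≤ ∑ y ∈ G.neighborFinset x, (1 - v y) :=
    sum_le_sum_of_subset_of_nonneg hU fun y _ _ => sub_nonneg.2 (hle y)
  have hnonneg : 0 ≤ ∑ y ∈ U, (1 - v y) := sum_nonneg fun y _ => sub_nonneg.2 (hle y)
  rw [hdefect] at hsubset hnonneg
  constructor <;> linarith

/-- If v is the principal eigenvector of a connected graph, normalized with maximum
entry 1 attained at x, and λ₁ > |N(x)| − 1, then for every subset U of N(x),
|U| − 1 < Σ_{y ∈ U} v(y) ≤ |U|. -/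
theorem neighborhood_subset_sum {V : Type*} [Fintype V] [DecidableEq V]
    (G : SimpleGraph V) [DecidableRel G.Adj] (hG : G.Connected)
    (lam : ℝ) (v : V → ℝ) (hv : ∀ y, 0 < v y)
    (heig : G.adjMatrix ℝ *ᵥ v = lam • v)
    (x : V) (hmax : ∀ y, v y ≤ v x) (hx1 : v x = 1)
    (hlam : (G.degree x : ℝ) - 1 < lam) :
    ∀ U ⊆ G.neighborFinset x,
      (U.card : ℝ) - 1 < ∑ y ∈ U, v y ∧ ∑ y ∈ U, v y ≤ (U.card : ℝ) :=
  neighborhood_subset_sum_general G lam v heig x hmax hx1 hlam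
end

section
/- Let G be a connected graph with principal eigenvector v scaled so the maximum entry is 1, attained at vertex x. If λ₁(G) > |N(x)| − 1, then at most one vertex in N(x) has eigenvector entry smaller than 1/2. -/
open Finset Matrix

/-! The eigenvalue equation at `x` reads `λ₁ = ∑_{y ∼ x} v y`. Every entry is at most `1`, and each
neighbour with entry below `1/2` costs at least `1/2` against the trivial bound `deg x`; two of them
would force `λ₁ ≤ deg x - 1`. -/

theorem SimpleGraph.eigenvalue_mul_eq_sum_neighborFinset {V : Type*} [Fintype V] [DecidableEq V]
    (G : SimpleGraph V) [DecidableRel G.Adj] {R : Type*} [NonAssocSemiring R] {lam : R}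
    {v : V → R} (heig : G.adjMatrix R *ᵥ v = lam • v) (x : V) :
    lam * v x = ∑ y ∈ G.neighborFinset x, v y := by
  have := congrFun heig x
  rw [SimpleGraph.adjMatrix_mulVec_apply, Pi.smul_apply, smul_eq_mul] at this
  exact this.symm

theorem Finset.sum_le_card_sub_mul_card_filter_lt {α : Type*} {s : Finset α} {f : α → ℝ}
    (hf : ∀ y ∈ s, f y ≤ 1) (c : ℝ) :
    ∑ y ∈ s, f y ≤ #s - (1 - c) * #(s.filter (f · < c)) := by
  have hsmall : ∑ y ∈ s.filter (f · < c), f y ≤ #(s.filter (f · < c)) * c := by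
    simpa using sum_le_sum fun y (hy : y ∈ s.filter (f · < c)) => (mem_filter.mp hy).2.le
  have hlarge : ∑ y ∈ s.filter (¬ f · < c), f y ≤ #(s.filter (¬ f · < c)) := by
    simpa using sum_le_sum fun y (hy : y ∈ s.filter (¬ f · < c)) => hf y (mem_filter.mp hy).1
  have hcard : (#(s.filter (f · < c)) : ℝ) + #(s.filter (¬ f · < c)) = #s := by
    exact_mod_cast card_filter_add_card_filter_not _
  rw [← sum_filter_add_sum_filter_not s (f · < c)]
  linarith

theorem at_most_one_small_neighbor_general {V : Type*} [Fintype V] [DecidableEq V]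
    (G : SimpleGraph V) [DecidableRel G.Adj]
    (lam : ℝ) (v : V → ℝ)
    (heig : G.adjMatrix ℝ *ᵥ v = lam • v)
    (x : V) (hmax : ∀ y, v y ≤ v x) (hx1 : v x = 1)
    (hlam : (G.degree x : ℝ) - 1 < lam) :
    ((G.neighborFinset x).filter (fun y => v y < 1 / 2)).card ≤ 1 := by
  have hsum := G.eigenvalue_mul_eq_sum_neighborFinset heig x
  have hbound := sum_le_card_sub_mul_card_filter_lt (s := G.neighborFinset x)
    (fun y _ => hx1 ▸ hmax y) (1 / 2)
  rw [hx1, mul_one] at hsum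
  rw [G.card_neighborFinset_eq_degree] at hbound
  by_contra! htwo
  have htwo' : (2 : ℝ) ≤ #((G.neighborFinset x).filter (fun y => v y < 1 / 2)) := by
    exact_mod_cast htwo
  linarith

/-- If v is the principal eigenvector of a connected graph, normalized with maximum
entry 1 attained at x, and λ₁ > |N(x)| − 1, then at most one vertex of N(x) has
eigenvector entry smaller than 1/2. -/
theorem at_most_one_small_neighbor {V : Type*} [Fintype V] [DecidableEq V]
    (G : SimpleGraph V) [DecidableRel G.Adj] (hG : G.Connected)
    (lam : ℝ) (v : V → ℝ) (hv : ∀ y, 0 < v y)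
    (heig : G.adjMatrix ℝ *ᵥ v = lam • v)
    (x : V) (hmax : ∀ y, v y ≤ v x) (hx1 : v x = 1)
    (hlam : (G.degree x : ℝ) - 1 < lam) :
    ((G.neighborFinset x).filter (fun y => v y < 1 / 2)).card ≤ 1 :=
  at_most_one_small_neighbor_general G lam v heig x hmax hx1 hlam
end

section
/- If G is a connected graph, v its principal eigenvector, and x, y vertices with N(y) \ {x} ⊊ N(x) \ {y} (the neighborhood of y, apart from possibly x, is strictly contained in that of x), then v(x) > v(y). -/
open Finset Matrix

namespace SimpleGraph

variable {V : Type*} [Fintype V] (G : SimpleGraph V) [DecidableRel G.Adj]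

theorem sum_neighborFinset_eq_sum_erase_add [DecidableEq V] {M : Type*} [AddCommMonoid M]
    (f : V → M) (x y : V) :
    ∑ w ∈ G.neighborFinset x, f w =
      ∑ w ∈ (G.neighborFinset x).erase y, f w + if G.Adj x y then f y else 0 := by
  by_cases hxy : G.Adj x y
  · rw [if_pos hxy, sum_erase_add _ _ ((G.mem_neighborFinset x y).mpr hxy)]
  · rw [if_neg hxy, add_zero, erase_eq_of_notMem (by simpa using hxy)]

theorem mul_apply_eq_sum_neighborFinset_of_adjMatrix_mulVec_eq_smul {lam : ℝ} {v : V → ℝ}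
    (heig : G.adjMatrix ℝ *ᵥ v = lam • v) (x : V) :
    lam * v x = ∑ w ∈ G.neighborFinset x, v w := by
  simpa [adjMatrix_mulVec_apply] using (congrFun heig x).symm

theorem eigenvalue_pos_of_adjMatrix_mulVec_eq_smul {lam : ℝ} {v : V → ℝ} (hv : ∀ z, 0 < v z)
    (heig : G.adjMatrix ℝ *ᵥ v = lam • v) {x z : V} (hxz : G.Adj x z) : 0 < lam := by
  have hsum : v z ≤ ∑ w ∈ G.neighborFinset x, v w :=
    single_le_sum (fun w _ => (hv w).le) ((G.mem_neighborFinset x z).mpr hxz)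
  rw [← G.mul_apply_eq_sum_neighborFinset_of_adjMatrix_mulVec_eq_smul heig x] at hsum
  exact pos_of_mul_pos_left ((hv z).trans_le hsum) (hv x).le

end SimpleGraph

theorem eigenvector_entry_lt_of_nbhd_ssubset_general {V : Type*} [Fintype V] [DecidableEq V]
    (G : SimpleGraph V) [DecidableRel G.Adj]
    (lam : ℝ) (v : V → ℝ) (hv : ∀ z, 0 < v z)
    (heig : G.adjMatrix ℝ *ᵥ v = lam • v)
    (x y : V) (hss : (G.neighborFinset y).erase x ⊂ (G.neighborFinset x).erase y) :
    v y < v x := by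
  obtain ⟨z, hzx, hzy⟩ := exists_of_ssubset hss
  have hlam : 0 < lam := G.eigenvalue_pos_of_adjMatrix_mulVec_eq_smul hv heig
    ((G.mem_neighborFinset x z).mp (mem_of_mem_erase hzx))
  have hsum : ∑ w ∈ (G.neighborFinset y).erase x, v w < ∑ w ∈ (G.neighborFinset x).erase y, v w :=
    sum_lt_sum_of_subset hss.subset hzx hzy (hv z) fun w _ _ => (hv w).le
  have hx := G.mul_apply_eq_sum_neighborFinset_of_adjMatrix_mulVec_eq_smul heig x
  have hy := G.mul_apply_eq_sum_neighborFinset_of_adjMatrix_mulVec_eq_smul heig y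
  rw [G.sum_neighborFinset_eq_sum_erase_add v x y] at hx
  rw [G.sum_neighborFinset_eq_sum_erase_add v y x] at hy
  simp only [G.adj_comm y x] at hy
  -- Subtracting the two eigenvector equations gives `(lam + [x ~ y]) * (v x - v y) > 0`.
  split_ifs at hx hy <;> nlinarith

/-- If in a connected graph the neighborhood of y (apart from possibly x) is strictly
contained in the neighborhood of x (apart from possibly y), then the principal
eigenvector satisfies v(x) > v(y). -/
theorem eigenvector_entry_lt_of_nbhd_ssubset {V : Type*} [Fintype V] [DecidableEq V]
    (G : SimpleGraph V) [DecidableRel G.Adj] (hG : G.Connected)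
    (lam : ℝ) (v : V → ℝ) (hv : ∀ z, 0 < v z)
    (heig : G.adjMatrix ℝ *ᵥ v = lam • v)
    (x y : V) (hss : (G.neighborFinset y).erase x ⊂ (G.neighborFinset x).erase y) :
    v y < v x :=
  eigenvector_entry_lt_of_nbhd_ssubset_general G lam v hv heig x y hss
end
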